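/- Let d ≥ 1 be an integer, M be a finite matroid, and 𝒳 be a collection of subsets of E(M) each of which is d-thick in M. If ℱ is a d-minimal cover of 𝒳 in M, then every subcollection of ℱ is d-scattered in M. -/

import Mathlib

open Set
open scoped Classical

namespace Matroid

variable {α β : Type*}

/-- The rank of a set `X` in a matroid `M`: the maximum size of an independent subset of `X`
(appropriate for finite matroids). -/
noncomputable def rk (M : Matroid α) (X : Set α) : ℕ :=
  sSup {n | ∃ I, I ⊆ X ∧ M.Indep I ∧ I.ncard = n}

/-- The rank `r(M)` of a matroid `M`. -/
noncomputable def rank (M : Matroid α) : ℕ := M.rk M.E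

/-- The deletion `M \ D` of a set `D` from `M`. -/
def delete' (M : Matroid α) (D : Set α) : Matroid α := M ↾ (M.E \ D)

/-- The contraction `M / C` of a set `C` in `M`, defined via duality. -/
def contract' (M : Matroid α) (C : Set α) : Matroid α := (M✶.delete' C)✶

/-- `N` is a minor of `M`, i.e. `N = M / C \ D` for some sets `C` and `D`. -/
def IsMinor' (N M : Matroid α) : Prop := ∃ C D : Set α, (M.contract' C).delete' D = N

/-- An isomorphism between matroids, possibly on different ground types. -/
def IsIso (M : Matroid α) (N : Matroid β) : Prop :=
  ∃ e : M.E ≃ N.E, ∀ I : Set M.E, M.Indep ((↑) '' I) ↔ N.Indep ((↑) '' (e '' I))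

/-- `N` is isomorphic to the uniform matroid `U_{k,n}`: the ground set has `n` elements and
the independent sets are exactly the subsets with at most `k` elements. -/
def IsUnif (N : Matroid α) (k n : ℕ) : Prop :=
  N.E.Finite ∧ N.E.ncard = n ∧ ∀ I ⊆ N.E, (N.Indep I ↔ I.ncard ≤ k)

/-- `M` has a minor isomorphic to `U_{k,n}`. -/
def HasUnifMinor (M : Matroid α) (k n : ℕ) : Prop :=
  ∃ N : Matroid α, N.IsMinor' M ∧ N.IsUnif k n

/-- `τ_a(M)`: the minimum size of a collection of subsets of `E(M)`, each of rank at most `a`,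
whose union is `E(M)`. -/
noncomputable def tau (M : Matroid α) (a : ℕ) : ℕ :=
  sInf {n | ∃ 𝒞 : Finset (Set α),
    𝒞.card = n ∧ (∀ X ∈ 𝒞, X ⊆ M.E ∧ M.rk X ≤ a) ∧ M.E ⊆ ⋃₀ ↑𝒞}

/-- `M` is `d`-thick: every collection of sets, each of rank less than `r(M)`, whose union
is `E(M)`, has at least `d` members. -/
def Thick (M : Matroid α) (d : ℕ) : Prop :=
  ∀ 𝒞 : Finset (Set α), (∀ X ∈ 𝒞, X ⊆ M.E ∧ M.rk X < M.rank) → M.E ⊆ ⋃₀ ↑𝒞 → d ≤ 𝒞.card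

/-- A set `X` is `d`-thick in `M` if the restriction `M|X` is `d`-thick. -/
def ThickIn (M : Matroid α) (d : ℕ) (X : Set α) : Prop := (M ↾ X).Thick d

/-- A collection of sets is simple in `M` if its members are pairwise dissimilar,
i.e. distinct members have distinct closures. -/
def SimpleColl (M : Matroid α) (𝒳 : Finset (Set α)) : Prop :=
  ∀ X ∈ 𝒳, ∀ Y ∈ 𝒳, M.closure X = M.closure Y → X = Y

/-- `ε_M(𝒳)`: the maximum size of a subcollection of `𝒳` that is simple in `M`. -/
noncomputable def eps (M : Matroid α) (𝒳 : Finset (Set α)) : ℕ :=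
  sSup {n | ∃ 𝒴 : Finset (Set α), 𝒴 ⊆ 𝒳 ∧ M.SimpleColl 𝒴 ∧ 𝒴.card = n}

/-- `𝒳` is `d`-firm in `M`: every subcollection `𝒳'` with `|𝒳'| > |𝒳|/d` has the same rank
as `𝒳`. -/
def Firm (M : Matroid α) (d : ℕ) (𝒳 : Finset (Set α)) : Prop :=
  ∀ 𝒳' ⊆ 𝒳, 𝒳.card < d * 𝒳'.card → M.rk (⋃₀ ↑𝒳') = M.rk (⋃₀ ↑𝒳)

/-- `ℱ` is a cover of the collection `𝒳` in `M`: every member of `𝒳` is contained in a member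
of `ℱ`. -/
def CoverOf (M : Matroid α) (ℱ 𝒳 : Finset (Set α)) : Prop :=
  (∀ F ∈ ℱ, F ⊆ M.E) ∧ ∀ X ∈ 𝒳, ∃ F ∈ ℱ, X ⊆ F

/-- `ℱ` is a cover of the matroid `M`: every element of `E(M)` lies in a member of `ℱ`. -/
def CoverOfGround (M : Matroid α) (ℱ : Finset (Set α)) : Prop :=
  (∀ F ∈ ℱ, F ⊆ M.E) ∧ M.E ⊆ ⋃₀ ↑ℱ

/-- The weight `wt^d_M(ℱ) = Σ_{F ∈ ℱ} d^{r_M(F)}`. -/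
noncomputable def wt (M : Matroid α) (d : ℕ) (ℱ : Finset (Set α)) : ℕ :=
  ∑ F ∈ ℱ, d ^ M.rk F

/-- `ℱ` is a `d`-minimal cover of the collection `𝒳` in `M`. -/
def MinimalCoverOf (M : Matroid α) (d : ℕ) (ℱ 𝒳 : Finset (Set α)) : Prop :=
  M.CoverOf ℱ 𝒳 ∧ ∀ ℱ' : Finset (Set α), M.CoverOf ℱ' 𝒳 → M.wt d ℱ ≤ M.wt d ℱ'

/-- `ℱ` is a `d`-minimal cover of the matroid `M`. -/
def MinimalCoverOfGround (M : Matroid α) (d : ℕ) (ℱ : Finset (Set α)) : Prop :=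
  M.CoverOfGround ℱ ∧ ∀ ℱ' : Finset (Set α), M.CoverOfGround ℱ' → M.wt d ℱ ≤ M.wt d ℱ'

/-- `τ^d(M)`: the minimum weight of a cover of `M`. -/
noncomputable def tauW (M : Matroid α) (d : ℕ) : ℕ :=
  sInf {n | ∃ ℱ : Finset (Set α), M.CoverOfGround ℱ ∧ M.wt d ℱ = n}

/-- `𝒳` is `d`-scattered in `M`: every member of `𝒳` is `d`-thick in `M`, and
`{cl_M(X) : X ∈ 𝒳}` is a `d`-minimal cover of `𝒳` in `M`. -/
def Scattered (M : Matroid α) (d : ℕ) (𝒳 : Finset (Set α)) : Prop :=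
  (∀ X ∈ 𝒳, M.ThickIn d X) ∧ M.MinimalCoverOf d (𝒳.image M.closure) 𝒳

/-- `(M, 𝒮; L)` is an `(a, q, h, d)`-pyramid, where `h = L.length` and `L` lists the
elements `e_1, …, e_h`. -/
def IsPyramid (M : Matroid α) (𝒮 : Finset (Set α)) (L : List α) (a q d : ℕ) : Prop :=
  L.Nodup ∧ M.Indep {x | x ∈ L} ∧
  𝒮.Nonempty ∧
  (∀ S ∈ 𝒮, S ⊆ M.E ∧ M.rk S = a) ∧
  (∀ S ∈ 𝒮, M.rk (S ∪ {x | x ∈ L}) = M.rk S + M.rk {x | x ∈ L}) ∧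
  (∀ i < L.length, ∀ S ∈ 𝒮, ∃ f : Fin q → Set α,
    (∀ j, f j ∈ 𝒮) ∧
    (∀ j k, j ≠ k →
      (M.contract' {x | x ∈ L.take i}).closure (f j) ≠
        (M.contract' {x | x ∈ L.take i}).closure (f k)) ∧
    (∀ j, (M.contract' {x | x ∈ L.take (i+1)}).closure (f j) =
      (M.contract' {x | x ∈ L.take (i+1)}).closure S)) ∧
  (∀ S ∈ 𝒮, M.ThickIn d S)

/-- `M` is representable over the field `F`. -/
def RepresentableOver (M : Matroid α) (F : Type*) [Field F] : Prop :=
  ∃ (n : ℕ) (φ : α → (Fin n → F)),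
    ∀ I ⊆ M.E, (M.Indep I ↔ LinearIndependent F (fun x : I => φ x))

end Matroid

/-!
A member `F` of a `d`-minimal cover `ℱ` that is not `d`-thick is covered by fewer than `d` sets
of smaller rank. Every `d`-thick `X ⊆ F` lies in the closure of one of them, since otherwise the
traces of these closures on `X` would cover `X` by fewer than `d` sets of rank `< r(X)`.
So replacing `F` by these closures still covers `𝒳`, at weight at most
`|𝒞| · d^(r(F) - 1) < d^r(F)`.
For `ℱ' ⊆ ℱ` and any cover `𝒢` of `ℱ'`, the collection `(ℱ \ ℱ') ∪ 𝒢` still covers `𝒳`, so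
`wt ℱ' ≤ wt 𝒢`; and the closures of the members of `ℱ'` cover `ℱ'` at weight at most `wt ℱ'`.
-/

namespace Matroid

variable {α : Type*} {M : Matroid α} {d r : ℕ} {X Y R : Set α} {𝒳 ℱ 𝒮 𝒢 𝒞 : Finset (Set α)}

section RankFinite

variable [M.RankFinite]

lemma cast_rk_eq_eRk (X : Set α) : (M.rk X : ℕ∞) = M.eRk X := by
  obtain ⟨I, hI⟩ := M.exists_isBasis' X
  have hgreatest : IsGreatest {n | ∃ J, J ⊆ X ∧ M.Indep J ∧ J.ncard = n} I.ncard := by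
    refine ⟨⟨I, hI.subset, hI.indep, rfl⟩, ?_⟩
    rintro _ ⟨J, hJX, hJ, rfl⟩
    have hle : J.encard ≤ I.encard := hI.eRk_eq_encard ▸ hJ.encard_le_eRk_of_subset hJX
    rwa [← hJ.finite.cast_ncard_eq, ← hI.indep.finite.cast_ncard_eq, Nat.cast_le] at hle
  rw [rk, hgreatest.csSup_eq, hI.indep.finite.cast_ncard_eq, hI.eRk_eq_encard]

lemma rk_closure_eq (X : Set α) : M.rk (M.closure X) = M.rk X := by
  exact_mod_cast (cast_rk_eq_eRk _).trans ((M.eRk_closure_eq X).trans (cast_rk_eq_eRk X).symm)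

lemma restrict_rk_eq (hXR : X ⊆ R) : (M ↾ R).rk X = M.rk X := by
  have h := (cast_rk_eq_eRk (M := M ↾ R) X).trans ((M.restrict_eRk_eq hXR).trans
    (cast_rk_eq_eRk X).symm)
  exact_mod_cast h

lemma restrict_rank_eq (X : Set α) : (M ↾ X).rank = M.rk X :=
  restrict_rk_eq subset_rfl

lemma rk_lt_of_not_subset_closure (hYX : Y ⊆ X) (hXE : X ⊆ M.E) (h : ¬ X ⊆ M.closure Y) :
    M.rk Y < M.rk X := by
  by_contra! hle
  have hle' : M.eRk X ≤ M.eRk Y := by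
    rw [← cast_rk_eq_eRk, ← cast_rk_eq_eRk]; exact_mod_cast hle
  rw [(M.isRkFinite_set Y).closure_eq_closure_of_subset_of_eRk_ge_eRk hYX hle'] at h
  exact h (M.subset_closure X hXE)

lemma wt_image_closure_le (𝒮 : Finset (Set α)) : M.wt d (𝒮.image M.closure) ≤ M.wt d 𝒮 :=
  (Finset.sum_image_le_of_nonneg fun _ _ => Nat.zero_le _).trans_eq <| by
    simp only [rk_closure_eq, wt]

end RankFinite

lemma image_closure_subset_ground (𝒞 : Finset (Set α)) : ∀ G ∈ 𝒞.image M.closure, G ⊆ M.E := by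
  simp only [Finset.mem_image]
  rintro _ ⟨C, -, rfl⟩
  exact M.closure_subset_ground C

lemma wt_union_le (𝒮 𝒢 : Finset (Set α)) : M.wt d (𝒮 ∪ 𝒢) ≤ M.wt d 𝒮 + M.wt d 𝒢 := by
  have h := Finset.sum_union_inter (s₁ := 𝒮) (s₂ := 𝒢) (f := fun F => d ^ M.rk F)
  simp only [wt]
  omega

lemma wt_sdiff_add_wt (h : 𝒮 ⊆ ℱ) : M.wt d (ℱ \ 𝒮) + M.wt d 𝒮 = M.wt d ℱ :=
  Finset.sum_sdiff h

lemma wt_lt_pow (hd : 1 ≤ d) (hcard : 𝒞.card < d) (hrk : ∀ C ∈ 𝒞, M.rk C < r) :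
    M.wt d 𝒞 < d ^ r := by
  have hmul : d * M.wt d 𝒞 ≤ 𝒞.card * d ^ r :=
    calc d * M.wt d 𝒞 = ∑ C ∈ 𝒞, d ^ (M.rk C + 1) := by simp only [wt, Finset.mul_sum, pow_succ']
      _ ≤ ∑ _C ∈ 𝒞, d ^ r := Finset.sum_le_sum fun C hC => Nat.pow_le_pow_right hd (hrk C hC)
      _ = 𝒞.card * d ^ r := by rw [Finset.sum_const, smul_eq_mul]
  exact Nat.lt_of_mul_lt_mul_left
    (hmul.trans_lt (Nat.mul_lt_mul_of_pos_right hcard (by positivity)))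

lemma CoverOf.sdiff_union (hℱ : M.CoverOf ℱ 𝒳) (h𝒢 : ∀ G ∈ 𝒢, G ⊆ M.E)
    (hexch : ∀ X ∈ 𝒳, ∀ F ∈ 𝒮, X ⊆ F → ∃ G ∈ 𝒢, X ⊆ G) : M.CoverOf (ℱ \ 𝒮 ∪ 𝒢) 𝒳 := by
  refine ⟨fun G hG => ?_, fun X hX => ?_⟩
  · rcases Finset.mem_union.1 hG with hG | hG
    exacts [hℱ.1 G (Finset.mem_sdiff.1 hG).1, h𝒢 G hG]
  · obtain ⟨F, hF, hXF⟩ := hℱ.2 X hX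
    by_cases hF𝒮 : F ∈ 𝒮
    · obtain ⟨G, hG, hXG⟩ := hexch X hX F hF𝒮 hXF
      exact ⟨G, Finset.mem_union_right _ hG, hXG⟩
    · exact ⟨F, Finset.mem_union_left _ (Finset.mem_sdiff.2 ⟨hF, hF𝒮⟩), hXF⟩

lemma MinimalCoverOf.wt_le_of_exchange (hmin : M.MinimalCoverOf d ℱ 𝒳) (h𝒮 : 𝒮 ⊆ ℱ)
    (h𝒢 : ∀ G ∈ 𝒢, G ⊆ M.E) (hexch : ∀ X ∈ 𝒳, ∀ F ∈ 𝒮, X ⊆ F → ∃ G ∈ 𝒢, X ⊆ G) :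
    M.wt d 𝒮 ≤ M.wt d 𝒢 := by
  have hopt := hmin.2 _ (hmin.1.sdiff_union h𝒢 hexch)
  have hunion := wt_union_le (M := M) (d := d) (ℱ \ 𝒮) 𝒢
  have hsplit := wt_sdiff_add_wt (M := M) (d := d) h𝒮
  omega

lemma ThickIn.exists_subset_closure [M.RankFinite] (hX : M.ThickIn d X) (hXE : X ⊆ M.E)
    (hcard : 𝒞.card < d) (hcov : X ⊆ ⋃₀ ↑𝒞) : ∃ C ∈ 𝒞, X ⊆ M.closure C := by
  by_contra! hno
  refine hcard.not_ge (le_trans (hX (𝒞.image (X ∩ M.closure ·)) ?_ ?_) Finset.card_image_le)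
  · simp only [Finset.mem_image, restrict_ground_eq]
    rintro _ ⟨C, hC, rfl⟩
    refine ⟨inter_subset_left, ?_⟩
    rw [restrict_rk_eq inter_subset_left, restrict_rank_eq]
    refine rk_lt_of_not_subset_closure inter_subset_left hXE fun hsub => hno C hC ?_
    exact hsub.trans (M.closure_subset_closure_of_subset_closure inter_subset_right)
  · intro x hx
    obtain ⟨C, hC, hxC⟩ := hcov hx
    exact ⟨_, Finset.mem_image_of_mem _ hC, hx, M.mem_closure_of_mem' hxC (hXE hx)⟩

lemma MinimalCoverOf.thickIn [M.RankFinite] (hd : 1 ≤ d) (hthick : ∀ X ∈ 𝒳, M.ThickIn d X)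
    (hmin : M.MinimalCoverOf d ℱ 𝒳) {F : Set α} (hF : F ∈ ℱ) : M.ThickIn d F := by
  intro 𝒞 h𝒞 hcov
  by_contra! hcard
  have hFE := hmin.1.1 F hF
  simp only [restrict_ground_eq] at h𝒞 hcov
  have hrk : ∀ C ∈ 𝒞, M.rk C < M.rk F := fun C hC => by
    simpa only [restrict_rk_eq (h𝒞 C hC).1, restrict_rank_eq] using (h𝒞 C hC).2
  have hle : M.wt d {F} ≤ M.wt d (𝒞.image M.closure) := by
    refine hmin.wt_le_of_exchange (Finset.singleton_subset_iff.2 hF)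
      (image_closure_subset_ground 𝒞) fun X hX F' hF' hXF => ?_
    rw [Finset.mem_singleton.1 hF'] at hXF
    obtain ⟨C, hC, hXC⟩ :=
      (hthick X hX).exists_subset_closure (hXF.trans hFE) hcard (hXF.trans hcov)
    exact ⟨_, Finset.mem_image_of_mem _ hC, hXC⟩
  rw [wt, Finset.sum_singleton] at hle
  exact hle.not_gt ((wt_image_closure_le 𝒞).trans_lt (wt_lt_pow hd hcard hrk))

lemma MinimalCoverOf.image_closure_minimalCoverOf [M.RankFinite]
    (hmin : M.MinimalCoverOf d ℱ 𝒳) (h𝒮 : 𝒮 ⊆ ℱ) :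
    M.MinimalCoverOf d (𝒮.image M.closure) 𝒮 := by
  refine ⟨⟨image_closure_subset_ground 𝒮, fun F hF => ⟨_, Finset.mem_image_of_mem _ hF,
    M.subset_closure F (hmin.1.1 F (h𝒮 hF))⟩⟩, fun 𝒢 h𝒢 => ?_⟩
  refine (wt_image_closure_le 𝒮).trans (hmin.wt_le_of_exchange h𝒮 h𝒢.1 ?_)
  intro X _ F hF hXF
  obtain ⟨G, hG, hFG⟩ := h𝒢.2 F hF
  exact ⟨G, hG, hXF.trans hFG⟩

end Matroid

namespace Matroid

/-- If `d ≥ 1`, every member of `𝒳` is `d`-thick in the finite matroid `M`,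
and `ℱ` is a `d`-minimal cover of `𝒳` in `M`, then every subcollection of `ℱ` is
`d`-scattered in `M`. -/
theorem statement13 {α : Type*} (d : ℕ) (hd : 1 ≤ d)
    (M : Matroid α) (hM : M.Finite) (𝒳 ℱ : Finset (Set α))
    (hthick : ∀ X ∈ 𝒳, M.ThickIn d X)
    (hcover : M.MinimalCoverOf d ℱ 𝒳) :
    ∀ ℱ' ⊆ ℱ, M.Scattered d ℱ' := by
  intro ℱ' hℱ'
  exact ⟨fun F hF => hcover.thickIn hd hthick (hℱ' hF),
    hcover.image_closure_minimalCoverOf hℱ'⟩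

end Matroid
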